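/- Combining the activation count and floor bound: for a continuous strictly increasing bijection f : [0,1] → [0,1] with f(0)=0, f(1)=1, and N ≥ 1, define θᵢ(x) = 1 if x ≥ f⁻¹(i/N) and 0 otherwise. Then |f(x) − (1/N)·Σ_{i=1}^N θᵢ(x)| ≤ 1/N for all x ∈ [0,1]. -/

import Mathlib

theorem tbn_universal_approximation_monotone (f g : ℝ → ℝ) (N : ℕ) (hN : 1 ≤ N)
    (hmono : StrictMonoOn f (Set.Icc 0 1))
    (hcont : ContinuousOn f (Set.Icc 0 1))
    (hmaps : Set.MapsTo f (Set.Icc 0 1) (Set.Icc 0 1))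
    (hf0 : f 0 = 0) (hf1 : f 1 = 1)
    (hg_maps : Set.MapsTo g (Set.Icc 0 1) (Set.Icc 0 1))
    (hgf : ∀ x ∈ Set.Icc (0 : ℝ) 1, g (f x) = x)
    (hfg : ∀ y ∈ Set.Icc (0 : ℝ) 1, f (g y) = y) :
    ∀ x ∈ Set.Icc (0 : ℝ) 1,
      |f x - (1 / (N : ℝ)) *
          ∑ i ∈ Finset.Icc 1 N,
            (if g ((i : ℝ) / (N : ℝ)) ≤ x then (1 : ℝ) else 0)| ≤ 1 / (N : ℝ) := by
  intro x hx
  have hNpos : (0:ℝ) < N := by exact_mod_cast Nat.lt_of_lt_of_le Nat.zero_lt_one hN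
  set y := (N:ℝ) * f x with hy
  have hfx : f x ∈ Set.Icc (0:ℝ) 1 := hmaps hx
  have hy0 : 0 ≤ y := mul_nonneg hNpos.le hfx.1
  have hyN : y ≤ N := by nlinarith [hfx.2]
  have hkey : ∀ i ∈ Finset.Icc 1 N, (g ((i:ℝ)/(N:ℝ)) ≤ x ↔ (i:ℝ) ≤ y) := by
    intro i hi
    simp only [Finset.mem_Icc] at hi
    have hiN : ((i:ℝ)/(N:ℝ)) ∈ Set.Icc (0:ℝ) 1 := by
      constructor
      · positivity
      · rw [div_le_one hNpos]; exact_mod_cast hi.2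
    have hgmem := hg_maps hiN
    have hfg' := hfg _ hiN
    constructor
    · intro h
      have h2 := hmono.monotoneOn hgmem hx h
      rw [hfg', div_le_iff₀ hNpos] at h2
      nlinarith
    · intro h
      by_contra hc
      push_neg at hc
      have h2 := hmono hx hgmem hc
      rw [hfg', lt_div_iff₀ hNpos] at h2
      nlinarith
  rw [Finset.sum_congr rfl (fun i hi => if_congr (hkey i hi) rfl rfl)]
  rw [Finset.sum_boole]
  have hfloorN : ⌊y⌋₊ ≤ N := by
    have := Nat.floor_le_of_le hyN
    simpa using this
  have hfilter : (Finset.Icc 1 N).filter (fun i : ℕ => ((i:ℝ) ≤ y)) = Finset.Icc 1 ⌊y⌋₊ := by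
    ext i
    simp only [Finset.mem_filter, Finset.mem_Icc]
    constructor
    · rintro ⟨⟨h1, _⟩, h3⟩
      exact ⟨h1, Nat.le_floor h3⟩
    · rintro ⟨h1, h2⟩
      exact ⟨⟨h1, le_trans h2 hfloorN⟩, (Nat.le_floor_iff hy0).mp h2⟩
  rw [hfilter, Nat.card_Icc]
  simp only [Nat.add_sub_cancel]
  have hfl : (⌊y⌋₊ : ℝ) ≤ y := Nat.floor_le hy0
  have hfu : y < ⌊y⌋₊ + 1 := Nat.lt_floor_add_one y
  have hfx' : f x = y / N := by field_simp [hy]; rw [hy]; ring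
  have heq : f x - 1 / (N:ℝ) * (⌊y⌋₊:ℝ) = (y - ⌊y⌋₊) / N := by
    rw [hfx']; ring
  rw [heq, abs_div, abs_of_pos hNpos]
  have habs : |y - (⌊y⌋₊:ℝ)| ≤ 1 := by
    rw [abs_le]; constructor <;> linarith
  rw [div_le_div_iff₀ hNpos hNpos]
  nlinarith
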